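/- arXiv:2106.07039 — 2 statements merged into one kernel-verified Lean document; each statement's English description precedes it below -/
import Mathlib

section
/- Let b ≥ 2 be a natural number, q ∈ [0,1] a real number, and δ : {0, …, b−1} → ℝ a sequence with δ(b−1) ≤ δ(β) ≤ δ(0) for all β. Write δ_0 = δ(0), δ_{b−1} = δ(b−1), and let r = ∑_{β=0}^{b−1} C(b−1, β) q^β (1−q)^{b−1−β} δ(β) be the exact expected reward and s = (1−q)δ_0 + q δ_{b−1} the surrogate reward. Then r ≤ (1 − q^{b−1})·δ_0 + q^{b−1}·δ_{b−1} and r ≥ (1−q)^{b−1}·δ_0 + (1 − (1−q)^{b−1})·δ_{b−1}; consequently r − s ≤ (q − q^{b−1})·(δ_0 − δ_{b−1}) and s − r ≤ ((1−q) − (1−q)^{b−1})·(δ_0 − δ_{b−1}). -/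
open Finset

/-- Quantitative core of Theorem 3: the gaps between the exact expected reward
and the surrogate reward are maximized at the two extreme sequences. -/
theorem reward_gap_bounds (b : ℕ) (hb : 2 ≤ b) (q : ℝ) (hq0 : 0 ≤ q) (hq1 : q ≤ 1)
    (δ : ℕ → ℝ) (hδ : ∀ β, β ≤ b - 1 → δ (b - 1) ≤ δ β ∧ δ β ≤ δ 0) :
    (∑ β ∈ Finset.range b,
        (Nat.choose (b - 1) β : ℝ) * q ^ β * (1 - q) ^ (b - 1 - β) * δ β) ≤
      (1 - q ^ (b - 1)) * δ 0 + q ^ (b - 1) * δ (b - 1) ∧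
    (1 - q) ^ (b - 1) * δ 0 + (1 - (1 - q) ^ (b - 1)) * δ (b - 1) ≤
      (∑ β ∈ Finset.range b,
        (Nat.choose (b - 1) β : ℝ) * q ^ β * (1 - q) ^ (b - 1 - β) * δ β) ∧
    (∑ β ∈ Finset.range b,
        (Nat.choose (b - 1) β : ℝ) * q ^ β * (1 - q) ^ (b - 1 - β) * δ β) -
      ((1 - q) * δ 0 + q * δ (b - 1)) ≤ (q - q ^ (b - 1)) * (δ 0 - δ (b - 1)) ∧
    ((1 - q) * δ 0 + q * δ (b - 1)) -
      (∑ β ∈ Finset.range b,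
        (Nat.choose (b - 1) β : ℝ) * q ^ β * (1 - q) ^ (b - 1 - β) * δ β) ≤
      ((1 - q) - (1 - q) ^ (b - 1)) * (δ 0 - δ (b - 1)) := by
  obtain ⟨n, rfl⟩ : ∃ n, b = n + 1 := ⟨b - 1, by omega⟩
  simp only [Nat.add_sub_cancel] at hδ ⊢
  set w : ℕ → ℝ := fun β => (Nat.choose n β : ℝ) * q ^ β * (1 - q) ^ (n - β) with hw
  have hwnn : ∀ β, 0 ≤ w β := fun β => by
    apply mul_nonneg (mul_nonneg (by positivity) (by positivity))
    exact pow_nonneg (by linarith) _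
  have hW : ∑ β ∈ Finset.range (n + 1), w β = 1 := by
    have h := add_pow q (1 - q) n
    have : ∑ β ∈ Finset.range (n + 1), w β
        = ∑ k ∈ Finset.range (n + 1), q ^ k * (1 - q) ^ (n - k) * (Nat.choose n k : ℝ) := by
      apply Finset.sum_congr rfl; intro k _; simp [hw]; ring
    rw [this, ← h]
    norm_num
  have hwn : w n = q ^ n := by simp [hw]
  have hw0 : w 0 = (1 - q) ^ n := by simp [hw]
  -- upper bound
  have hU : (∑ β ∈ Finset.range (n + 1), w β * δ β)
      ≤ (1 - q ^ n) * δ 0 + q ^ n * δ n := by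
    rw [Finset.sum_range_succ]
    have h1 : ∑ β ∈ Finset.range n, w β * δ β ≤ ∑ β ∈ Finset.range n, w β * δ 0 := by
      apply Finset.sum_le_sum
      intro i hi
      have hi' := Finset.mem_range.mp hi
      exact mul_le_mul_of_nonneg_left ((hδ i (by omega)).2) (hwnn i)
    have h2 : ∑ β ∈ Finset.range n, w β * δ 0 = (1 - q ^ n) * δ 0 := by
      rw [← Finset.sum_mul]
      have : ∑ β ∈ Finset.range n, w β = 1 - q ^ n := by
        have := hW
        rw [Finset.sum_range_succ, hwn] at this
        linarith
      rw [this]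
    rw [hwn]
    linarith
  -- lower bound
  have hL : (1 - q) ^ n * δ 0 + (1 - (1 - q) ^ n) * δ n
      ≤ ∑ β ∈ Finset.range (n + 1), w β * δ β := by
    rw [Finset.sum_range_succ']
    have h1 : ∑ β ∈ Finset.range n, w (β + 1) * δ n
        ≤ ∑ β ∈ Finset.range n, w (β + 1) * δ (β + 1) := by
      apply Finset.sum_le_sum
      intro i hi
      have hi' := Finset.mem_range.mp hi
      exact mul_le_mul_of_nonneg_left ((hδ (i + 1) (by omega)).1) (hwnn (i + 1))
    have h2 : ∑ β ∈ Finset.range n, w (β + 1) * δ n = (1 - (1 - q) ^ n) * δ n := by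
      rw [← Finset.sum_mul]
      have : ∑ β ∈ Finset.range n, w (β + 1) = 1 - (1 - q) ^ n := by
        have := hW
        rw [Finset.sum_range_succ', hw0] at this
        linarith
      rw [this]
    rw [hw0]
    linarith
  have hsum : (∑ β ∈ Finset.range (n + 1),
      (Nat.choose n β : ℝ) * q ^ β * (1 - q) ^ (n - β) * δ β)
      = ∑ β ∈ Finset.range (n + 1), w β * δ β := by
    apply Finset.sum_congr rfl; intro k _; simp [hw]
  rw [hsum]
  refine ⟨hU, hL, ?_, ?_⟩
  · calc (∑ β ∈ Finset.range (n + 1), w β * δ β) - ((1 - q) * δ 0 + q * δ n)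
        ≤ (1 - q ^ n) * δ 0 + q ^ n * δ n - ((1 - q) * δ 0 + q * δ n) := by linarith
      _ = (q - q ^ n) * (δ 0 - δ n) := by ring
  · calc ((1 - q) * δ 0 + q * δ n) - (∑ β ∈ Finset.range (n + 1), w β * δ β)
        ≤ ((1 - q) * δ 0 + q * δ n)
          - ((1 - q) ^ n * δ 0 + (1 - (1 - q) ^ n) * δ n) := by linarith
      _ = ((1 - q) - (1 - q) ^ n) * (δ 0 - δ n) := by ring
end

section
/- Let b ≥ 2 be a natural number, q ∈ [0,1] a real number, and δ : {0, …, b−1} → ℝ a sequence with δ(b−1) ≤ δ(β) ≤ δ(0) for all β. Write δ_0 = δ(0) and δ_{b−1} = δ(b−1). Then the absolute gap between the surrogate reward s = (1−q)δ_0 + q δ_{b−1} and the exact expected reward r = ∑_{β=0}^{b−1} C(b−1, β) q^β (1−q)^{b−1−β} δ(β) is bounded: |s − r| ≤ max{ (q − (1−q)^{b−1})·(δ_0 − δ_{b−1}), (1 − q − q^{b−1})·(δ_0 − δ_{b−1}) }. -/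
open Finset

/-- Theorem 3: bound on the absolute gap between the surrogate reward and the
exact expected reward. -/
theorem surrogate_reward_gap_bound (b : ℕ) (hb : 2 ≤ b) (q : ℝ)
    (hq0 : 0 ≤ q) (hq1 : q ≤ 1) (δ : ℕ → ℝ)
    (hδ : ∀ β, β ≤ b - 1 → δ (b - 1) ≤ δ β ∧ δ β ≤ δ 0) :
    |((1 - q) * δ 0 + q * δ (b - 1)) -
        (∑ β ∈ Finset.range b,
          (Nat.choose (b - 1) β : ℝ) * q ^ β * (1 - q) ^ (b - 1 - β) * δ β)| ≤
      max ((q - (1 - q) ^ (b - 1)) * (δ 0 - δ (b - 1)))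
          ((1 - q - q ^ (b - 1)) * (δ 0 - δ (b - 1))) := by
  set n := b - 1 with hn
  have hb1 : b = n + 1 := by omega
  have hq1' : (0:ℝ) ≤ 1 - q := by linarith
  set w : ℕ → ℝ := fun β => (Nat.choose n β : ℝ) * q ^ β * (1 - q) ^ (n - β) with hw
  have hwnn : ∀ β, 0 ≤ w β := fun β => by
    apply mul_nonneg (mul_nonneg (by positivity) (by positivity)) (by positivity)
  have hsum : ∑ β ∈ Finset.range (n + 1), w β = 1 := by
    have h := add_pow q (1 - q) n
    have h1 : q + (1 - q) = 1 := by ring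
    rw [h1, one_pow] at h
    conv_rhs => rw [h]
    exact Finset.sum_congr rfl (fun k _ => by simp [hw]; ring)
  have hΔ : 0 ≤ δ 0 - δ n := by
    have := (hδ 0 (Nat.zero_le _)).1
    simpa [hn] using by linarith
  have hmem : ∀ i ∈ Finset.range (n + 1), i ≤ b - 1 := by
    intro i hi; rw [Finset.mem_range] at hi; omega
  -- split the sum two ways
  have hsplit1 : ∑ β ∈ Finset.range (n + 1), w β * δ β
      = δ n + ∑ β ∈ Finset.range (n + 1), w β * (δ β - δ n) := by
    have : ∑ β ∈ Finset.range (n + 1), w β * δ β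
        = ∑ β ∈ Finset.range (n + 1), (w β * δ n + w β * (δ β - δ n)) :=
      Finset.sum_congr rfl (fun k _ => by ring)
    rw [this, Finset.sum_add_distrib, ← Finset.sum_mul, hsum]; ring
  have hsplit2 : ∑ β ∈ Finset.range (n + 1), w β * δ β
      = δ 0 - ∑ β ∈ Finset.range (n + 1), w β * (δ 0 - δ β) := by
    have : ∑ β ∈ Finset.range (n + 1), w β * δ β
        = ∑ β ∈ Finset.range (n + 1), (w β * δ 0 - w β * (δ 0 - δ β)) :=
      Finset.sum_congr rfl (fun k _ => by ring)
    rw [this, Finset.sum_sub_distrib, ← Finset.sum_mul, hsum]; ring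
  have hlow : (1 - q) ^ n * (δ 0 - δ n) ≤
      ∑ β ∈ Finset.range (n + 1), w β * (δ β - δ n) := by
    have h0 : (0:ℕ) ∈ Finset.range (n + 1) := Finset.mem_range.mpr (Nat.succ_pos n)
    have := Finset.single_le_sum (f := fun β => w β * (δ β - δ n))
      (fun i hi => mul_nonneg (hwnn i) (by have := (hδ i (hmem i hi)).1; linarith)) h0
    simpa [hw] using this
  have hhigh : q ^ n * (δ 0 - δ n) ≤
      ∑ β ∈ Finset.range (n + 1), w β * (δ 0 - δ β) := by
    have h0 : n ∈ Finset.range (n + 1) := Finset.self_mem_range_succ n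
    have := Finset.single_le_sum (f := fun β => w β * (δ 0 - δ β))
      (fun i hi => mul_nonneg (hwnn i) (by have := (hδ i (hmem i hi)).2; linarith)) h0
    simpa [hw] using this
  have hgoalsum : (∑ β ∈ Finset.range b,
      (Nat.choose (b - 1) β : ℝ) * q ^ β * (1 - q) ^ (b - 1 - β) * δ β)
      = ∑ β ∈ Finset.range (n + 1), w β * δ β := by
    rw [hb1]
    exact Finset.sum_congr rfl (fun k _ => by simp [hw, hn])
  rw [hgoalsum, abs_sub_le_iff]
  have hA : ((1 - q) * δ 0 + q * δ n) - ∑ β ∈ Finset.range (n + 1), w β * δ β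
      ≤ ((1 - q) - (1 - q) ^ n) * (δ 0 - δ n) := by
    rw [hsplit1]; nlinarith [hlow]
  have hB : (∑ β ∈ Finset.range (n + 1), w β * δ β) - ((1 - q) * δ 0 + q * δ n)
      ≤ (q - q ^ n) * (δ 0 - δ n) := by
    rw [hsplit2]; nlinarith [hhigh]
  constructor
  · rcases le_total q (1/2) with h | h
    · refine le_trans hA (le_trans ?_ (le_max_right _ _))
      have hpow : q ^ n ≤ (1 - q) ^ n := pow_le_pow_left₀ hq0 (by linarith) n
      nlinarith
    · refine le_trans hA (le_trans ?_ (le_max_left _ _))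
      nlinarith
  · rcases le_total q (1/2) with h | h
    · refine le_trans hB (le_trans ?_ (le_max_right _ _))
      nlinarith
    · refine le_trans hB (le_trans ?_ (le_max_left _ _))
      have hpow : (1 - q) ^ n ≤ q ^ n := pow_le_pow_left₀ hq1' (by linarith) n
      nlinarith
end
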